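/- Rounding lemma for the parameterized FPTAS of R_{‖·‖}: let each degree d have nonnegative disutility contribution q(d), let q_σ > 0, fix ε ∈ (0,1] and m ≥ 1, define rounded disutilities α(d) = ⌊q(d)·m/(ε·q_σ)⌋. If O and S are valid sets of at most m degrees with S minimizing ∑_{d∈S} α(d) among valid sets, and ∑_{d∈O} q(d) ≥ q_σ, then ∑_{d∈S} q(d) ≤ (1+ε)·∑_{d∈O} q(d). -/

import Mathlib

open Finset

section PBDefs

variable {V D P : Type*}

/-- A valid outcome: exactly one degree chosen per project, total cost within budget. -/
def ValidSet [DecidableEq P] (proj : D → P) (c : D → ℕ) (b : ℕ) (S : Finset D) : Prop :=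
  (∀ j : P, (S.filter fun d => proj d = j).card = 1) ∧ ∑ d ∈ S, c d ≤ b

/-- The cost of the degree of project `j` chosen in `S`. -/
def chosenCost [DecidableEq P] (proj : D → P) (c : D → ℕ) (S : Finset D) (j : P) : ℕ :=
  ∑ d ∈ S.filter (fun d => proj d = j), c d

/-- Total cardinal utility (rule `R_{|S|}`): a voter gets 1 from project `j` iff the
chosen cost is nonzero and within her bounds. -/
def cardUtilTotal [Fintype V] [Fintype P] [DecidableEq P] (proj : D → P) (c : D → ℕ)
    (l u : V → P → ℕ) (S : Finset D) : ℕ :=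
  ∑ i : V, (univ.filter fun j : P =>
    chosenCost proj c S j ≠ 0 ∧ l i j ≤ chosenCost proj c S j ∧
      chosenCost proj c S j ≤ u i j).card

/-- Total cost utility (rule `R_{c(S)}`). -/
def costUtilTotal [Fintype V] [Fintype P] [DecidableEq P] (proj : D → P) (c : D → ℕ)
    (l u : V → P → ℕ) (S : Finset D) : ℕ :=
  ∑ i : V, ∑ j : P,
    if l i j ≤ chosenCost proj c S j ∧ chosenCost proj c S j ≤ u i j then
      chosenCost proj c S j else 0

/-- Total cost-capped utility (rule `R_{ĉ(S)}`). -/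
def cappedUtilTotal [Fintype V] [Fintype P] [DecidableEq P] (proj : D → P) (c : D → ℕ)
    (l u : V → P → ℕ) (S : Finset D) : ℕ :=
  ∑ i : V, ∑ j : P,
    if chosenCost proj c S j < l i j then 0
    else if chosenCost proj c S j ≤ u i j then chosenCost proj c S j
    else u i j

/-- Total distance disutility (rule `R_{‖·‖}`): distance of the chosen cost to the
interval `[l i j, u i j]`, via truncated subtraction (`max(l-c,0)+max(c-u,0)`). -/
def disTotal [Fintype V] [Fintype P] [DecidableEq P] (proj : D → P) (c : D → ℕ)
    (l u : V → P → ℕ) (S : Finset D) : ℕ :=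
  ∑ i : V, ∑ j : P,
    ((l i j - chosenCost proj c S j) + (chosenCost proj c S j - u i j))

/-- `τ_j`: the set of costs of degrees of project `j` unanimously acceptable to all voters. -/
def tauSet [Fintype V] [Fintype D] [DecidableEq P] (proj : D → P) (c : D → ℕ)
    (l u : V → P → ℕ) (j : P) : Finset ℕ :=
  ((univ : Finset D).filter fun d => proj d = j ∧ ∀ i : V, l i j ≤ c d ∧ c d ≤ u i j).image c

/-- Disutility contribution `q(d)` of a degree `d`. -/
def qContrib [Fintype V] (proj : D → P) (c : D → ℕ) (l u : V → P → ℕ) (d : D) : ℕ :=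
  (∑ i ∈ univ.filter (fun i : V => c d < l i (proj d)), (l i (proj d) - c d))
  + ∑ i ∈ univ.filter (fun i : V => u i (proj d) < c d), (c d - u i (proj d))

end PBDefs

section FloorRounding

variable {ι : Type*} {δ x : ℝ}

theorem mul_floor_div_le (hδ : 0 ≤ δ) (hx : 0 ≤ x) : δ * ⌊x / δ⌋₊ ≤ x := by
  rcases hδ.eq_or_lt with rfl | hδ
  · simpa using hx
  · exact (le_div_iff₀' hδ).mp (Nat.floor_le (by positivity))

theorem lt_mul_floor_div_add_one (hδ : 0 < δ) : x < δ * (⌊x / δ⌋₊ + 1) :=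
  (div_lt_iff₀' hδ).mp (Nat.lt_floor_add_one _)

/-- Rounding down to multiples of `δ` loses less than `δ` per term, so a set minimising the
rounded sum is within `δ · #s` of any competitor in the true sum. -/
theorem sum_le_sum_add_of_sum_floor_div_le (hδ : 0 < δ) {f : ι → ℝ} {s t : Finset ι}
    (hf : ∀ i ∈ t, 0 ≤ f i) (h : ∑ i ∈ s, ⌊f i / δ⌋₊ ≤ ∑ i ∈ t, ⌊f i / δ⌋₊) :
    ∑ i ∈ s, f i ≤ ∑ i ∈ t, f i + δ * #s := by
  have hfloor : (∑ i ∈ s, (⌊f i / δ⌋₊ : ℝ)) ≤ ∑ i ∈ t, (⌊f i / δ⌋₊ : ℝ) := by exact_mod_cast h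
  calc ∑ i ∈ s, f i
      ≤ ∑ i ∈ s, δ * (⌊f i / δ⌋₊ + 1) :=
        sum_le_sum fun i _ => (lt_mul_floor_div_add_one hδ).le
    _ = δ * ∑ i ∈ s, (⌊f i / δ⌋₊ : ℝ) + δ * #s := by
        simp only [mul_add, mul_one, sum_add_distrib, sum_const, nsmul_eq_mul, mul_sum, mul_comm]
    _ ≤ δ * ∑ i ∈ t, (⌊f i / δ⌋₊ : ℝ) + δ * #s := by gcongr
    _ ≤ ∑ i ∈ t, f i + δ * #s := by
        rw [mul_sum]
        gcongr with i hi
        exact mul_floor_div_le hδ.le (hf i hi)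

end FloorRounding

theorem parameterized_fptas_rounding_general {D : Type*} (Valid : Finset D → Prop)
    (q : D → ℕ) (qσ m : ℕ) (ε : ℝ)
    (hε0 : 0 < ε) (hm : 1 ≤ m) (hqσ : 0 < qσ)
    (α : D → ℕ) (hα : ∀ d, α d = ⌊((q d : ℝ) * m) / (ε * qσ)⌋₊)
    (O S : Finset D) (hO : Valid O)
    (hScard : S.card ≤ m)
    (hmin : ∀ T : Finset D, Valid T → ∑ d ∈ S, α d ≤ ∑ d ∈ T, α d)
    (hOPT : (qσ : ℝ) ≤ ∑ d ∈ O, (q d : ℝ)) :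
    (∑ d ∈ S, (q d : ℝ)) ≤ (1 + ε) * ∑ d ∈ O, (q d : ℝ) := by
  set δ : ℝ := ε * qσ / m
  have hm₀ : (0 : ℝ) < m := by exact_mod_cast hm
  have hδ : 0 < δ := by positivity
  have hαδ : ∀ d, α d = ⌊(q d : ℝ) / δ⌋₊ := fun d => by rw [hα, div_div_eq_mul_div]
  have hround : ∑ d ∈ S, (q d : ℝ) ≤ ∑ d ∈ O, (q d : ℝ) + δ * #S :=
    sum_le_sum_add_of_sum_floor_div_le hδ (fun d _ => Nat.cast_nonneg (q d))
      (by simpa only [hαδ] using hmin O hO)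
  have hslack : δ * #S ≤ ε * ∑ d ∈ O, (q d : ℝ) :=
    calc δ * #S ≤ δ * m := by gcongr
      _ = ε * qσ := div_mul_cancel₀ _ hm₀.ne'
      _ ≤ ε * ∑ d ∈ O, (q d : ℝ) := by gcongr
  linarith

/-- rounding lemma for the parameterized FPTAS for `R_{‖·‖}`. -/
theorem parameterized_fptas_rounding {D : Type*} (Valid : Finset D → Prop)
    (q : D → ℕ) (qσ m : ℕ) (ε : ℝ)
    (hε0 : 0 < ε) (hε1 : ε ≤ 1) (hm : 1 ≤ m) (hqσ : 0 < qσ)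
    (α : D → ℕ) (hα : ∀ d, α d = ⌊((q d : ℝ) * m) / (ε * qσ)⌋₊)
    (O S : Finset D) (hO : Valid O) (hSv : Valid S)
    (hOcard : O.card ≤ m) (hScard : S.card ≤ m)
    (hmin : ∀ T : Finset D, Valid T → ∑ d ∈ S, α d ≤ ∑ d ∈ T, α d)
    (hOPT : (qσ : ℝ) ≤ ∑ d ∈ O, (q d : ℝ)) :
    (∑ d ∈ S, (q d : ℝ)) ≤ (1 + ε) * ∑ d ∈ O, (q d : ℝ) :=
  parameterized_fptas_rounding_general Valid q qσ m ε hε0 hm hqσ α hα O S hO hScard hmin hOPT
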